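/- arXiv:1808.06050 — 2 statements merged into one kernel-verified Lean document; each statement's English description precedes it below -/
import Mathlib

section
/- Under the hypotheses of the generalized-coupling contraction proposition — namely: γ ∈ (0,1], υ > 0, C > 0, θ ∈ (0,1), p : (0,∞) → [0,1] with p(s)/s^γ → 0 as s → 0, a family {μ^x : x ∈ 𝒞} of probability measures on 𝒞, and families of 𝒞-valued random elements ξ^{x,y}, η^{x,y} with Law(ξ^{x,y}) = μ^x, d_TV(Law(η^{x,y}), μ^y) ≤ C‖x−y‖^γ for ‖x−y‖ ≤ υ, and P(‖ξ^{x,y} − η^{x,y}‖ > θ‖x−y‖) ≤ p(‖x−y‖) for ‖x−y‖ ≤ υ — for every θ₁ ∈ (θ^γ,1) there exists N₀ such that for all N ≥ N₀ the coupling distance d_{N,γ} is non-expanding for the family: d_{N,γ}(μ^x, μ^y) ≤ d_{N,γ}(x,y) for ALL x, y ∈ 𝒞 (including those with d_{N,γ}(x,y) = 1). -/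
/-! For `x ≠ y`, glue the generalized coupling into a true coupling of `μ^x` and `μ^y`: keep the
part of the joint law of `(ξ, η)` on which the law of `η` lies below `μ^y`, and couple the leftover
mass independently. Since `d_{N,γ} ≤ 1`, this costs at most `d_TV(Law η, μ^y)` extra, so with
`s = ‖x - y‖` the coupling distance is at most `N θ^γ s^γ + p(s) + C s^γ`. Once `p(s) ≤ s^γ`
(`s` small) and `N (1 - θ^γ) ≥ 1 + C`, this is `≤ N s^γ`. Pairs with `N s^γ ≥ 1` are trivial, and
taking `N ≥ δ^(-γ)` makes every other pair satisfy `s < δ`. -/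

open MeasureTheory Set

/-- The space `𝒞 = C([-r,0], ℝⁿ)` with the supremum norm. -/
abbrev PathSpace (r : ℝ) (n : ℕ) : Type :=
  C(Set.Icc (-r) (0:ℝ), EuclideanSpace ℝ (Fin n))

noncomputable instance (r : ℝ) (n : ℕ) : MeasurableSpace (PathSpace r n) := borel _

instance (r : ℝ) (n : ℕ) : BorelSpace (PathSpace r n) := ⟨rfl⟩

/-- The metric `d_{N,γ}(x,y) = min(N‖x−y‖^γ, 1)`. -/
noncomputable def dNg {E : Type*} [NormedAddCommGroup E] (N γ : ℝ) (x y : E) : ℝ :=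
  min (N * ‖x - y‖ ^ γ) 1

/-- The total variation distance `d_TV(μ,ν) = sup_A |μ(A) − ν(A)|`. -/
noncomputable def tvDist {α : Type*} [MeasurableSpace α] (μ ν : Measure α) : ℝ :=
  ⨆ A : {s : Set α // MeasurableSet s}, |(μ A).toReal - (ν A).toReal|

/-- The coupling (Kantorovich) distance associated to a bounded metric `d`:
the infimum of `∫ d(x,y) λ(dx,dy)` over all couplings `λ` of `μ` and `ν`. -/
noncomputable def couplingDist {α : Type*} [MeasurableSpace α]
    (d : α → α → ℝ) (μ ν : Measure α) : ℝ :=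
  ⨅ π : {π : Measure (α × α) // π.map Prod.fst = μ ∧ π.map Prod.snd = ν},
    ∫ z, d z.1 z.2 ∂(π : Measure (α × α))

open scoped Topology
open Filter

section Coupling

variable {α β : Type*} [MeasurableSpace α] [MeasurableSpace β]

lemma integral_le_measureReal_univ_of_le_one {σ : Measure α} [IsFiniteMeasure σ] {f : α → ℝ}
    (hf : ∀ x, f x ≤ 1) : ∫ x, f x ∂σ ≤ σ.real univ := by
  by_cases hfi : Integrable f σ
  · calc ∫ x, f x ∂σ ≤ ∫ _, (1 : ℝ) ∂σ := integral_mono hfi (integrable_const 1) hf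
      _ = σ.real univ := by simp
  · rw [integral_undef hfi]
    exact measureReal_nonneg

lemma abs_sub_le_tvDist (ν m : Measure α) [IsProbabilityMeasure ν] [IsProbabilityMeasure m]
    {A : Set α} (hA : MeasurableSet A) : |ν.real A - m.real A| ≤ tvDist ν m := by
  have hbdd : BddAbove (range fun B : {s : Set α // MeasurableSet s} =>
      |(ν B).toReal - (m B).toReal|) := by
    refine ⟨1, ?_⟩
    rintro _ ⟨B, rfl⟩
    exact abs_sub_le_of_nonneg_of_le measureReal_nonneg measureReal_le_one
      measureReal_nonneg measureReal_le_one
  exact le_ciSup hbdd ⟨A, hA⟩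

/-- The witness is `ν ⊓ m = m|_A + ν|_Aᶜ` for a Hahn decomposition `(A, Aᶜ)` of `ν - m`. -/
lemma exists_le_le_one_sub_le_tvDist (ν m : Measure α) [IsProbabilityMeasure ν]
    [IsProbabilityMeasure m] :
    ∃ ρ ≤ ν, ρ ≤ m ∧ 1 - ρ.real univ ≤ tvDist ν m := by
  obtain ⟨A, hA, hmν, hνm⟩ := hahn_decomposition (μ := ν) (ν := m)
  set ρ := m.restrict A + ν.restrict Aᶜ
  have hρ_apply : ∀ s, MeasurableSet s → ρ s = m (s ∩ A) + ν (s \ A) := fun s hs => by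
    rw [Measure.add_apply, Measure.restrict_apply hs, Measure.restrict_apply hs, sdiff_eq]
  refine ⟨ρ, ?_, ?_, ?_⟩
  · refine Measure.le_iff.2 fun s hs => ?_
    rw [hρ_apply s hs, ← measure_inter_add_sdiff s hA]
    exact add_le_add (hmν _ (hs.inter hA) inter_subset_right) le_rfl
  · refine Measure.le_iff.2 fun s hs => ?_
    rw [hρ_apply s hs, ← measure_inter_add_sdiff s hA (μ := m)]
    exact add_le_add le_rfl (hνm _ (hs.diff hA) (sdiff_subset_compl _ _))
  · have hρ_univ : ρ.real univ = m.real A + (1 - ν.real A) := by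
      rw [← probReal_compl_eq_one_sub hA, measureReal_def, Measure.add_apply,
        Measure.restrict_apply_univ, Measure.restrict_apply_univ,
        ENNReal.toReal_add (measure_ne_top _ _) (measure_ne_top _ _)]
      rfl
    calc 1 - ρ.real univ = ν.real A - m.real A := by
          rw [hρ_univ]; ring
      _ ≤ |ν.real A - m.real A| := le_abs_self _
      _ ≤ tvDist ν m := abs_sub_le_tvDist ν m hA

lemma exists_le_map_snd_eq (κ : Measure (α × β)) [IsFiniteMeasure κ] {ρ : Measure β}
    (hρ : ρ ≤ κ.map Prod.snd) : ∃ κ₁ ≤ κ, κ₁.map Prod.snd = ρ := by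
  have : IsFiniteMeasure ρ := isFiniteMeasure_of_le _ hρ
  set g := ρ.rnDeriv (κ.map Prod.snd)
  have hg_le_one : ∀ᵐ z ∂κ, g z.2 ≤ 1 :=
    ae_of_ae_map measurable_snd.aemeasurable (Measure.rnDeriv_le_one_of_le hρ)
  have hρ_eq : (κ.map Prod.snd).withDensity g = ρ :=
    Measure.withDensity_rnDeriv_eq _ _ (Measure.absolutelyContinuous_of_le hρ)
  refine ⟨κ.withDensity fun z => g z.2, ?_, ?_⟩
  · calc κ.withDensity (fun z => g z.2) ≤ κ.withDensity 1 := withDensity_mono hg_le_one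
      _ = κ := withDensity_one
  · ext B hB
    rw [Measure.map_apply measurable_snd hB, withDensity_apply _ (measurable_snd hB), ← hρ_eq,
      withDensity_apply _ hB]
    exact (setLIntegral_map hB (Measure.measurable_rnDeriv _ _) measurable_snd).symm

lemma exists_map_fst_eq_map_snd_eq (a : Measure α) (b : Measure β) [IsFiniteMeasure a]
    [IsFiniteMeasure b] (hab : a univ = b univ) :
    ∃ σ : Measure (α × β), σ.map Prod.fst = a ∧ σ.map Prod.snd = b := by
  by_cases h0 : a univ = 0
  · refine ⟨0, ?_, ?_⟩
    · rw [Measure.map_zero, eq_comm, ← Measure.measure_univ_eq_zero, h0]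
    · rw [Measure.map_zero, eq_comm, ← Measure.measure_univ_eq_zero, ← hab, h0]
  · have hinv : (a univ)⁻¹ * a univ = 1 := ENNReal.inv_mul_cancel h0 (measure_ne_top _ _)
    refine ⟨(a univ)⁻¹ • a.prod b, ?_, ?_⟩
    · rw [Measure.map_smul, Measure.map_fst_prod, smul_smul, ← hab, hinv, one_smul]
    · rw [Measure.map_smul, Measure.map_snd_prod, smul_smul, hinv, one_smul]

variable {d : α → α → ℝ}

lemma couplingDist_le_integral (hd0 : ∀ x y, 0 ≤ d x y) {μ ν : Measure α} {π : Measure (α × α)}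
    (hπ₁ : π.map Prod.fst = μ) (hπ₂ : π.map Prod.snd = ν) :
    couplingDist d μ ν ≤ ∫ z, d z.1 z.2 ∂π :=
  ciInf_le (f := fun π : {π : Measure (α × α) // π.map Prod.fst = μ ∧ π.map Prod.snd = ν} =>
      ∫ z, d z.1 z.2 ∂(π : Measure (α × α)))
    ⟨0, by rintro _ ⟨π', rfl⟩; exact integral_nonneg fun z => hd0 _ _⟩ ⟨π, hπ₁, hπ₂⟩

lemma couplingDist_self_nonpos (hdm : Measurable fun z : α × α => d z.1 z.2) (hd0 : ∀ x y, 0 ≤ d x y)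
    (hd : ∀ x, d x x = 0) (μ : Measure α) : couplingDist d μ μ ≤ 0 := by
  have hdiag : Measurable fun x : α => (x, x) := measurable_id.prodMk measurable_id
  calc couplingDist d μ μ ≤ ∫ z, d z.1 z.2 ∂(μ.map fun x => (x, x)) :=
        couplingDist_le_integral hd0 (by rw [Measure.map_map measurable_fst hdiag]; exact Measure.map_id)
          (by rw [Measure.map_map measurable_snd hdiag]; exact Measure.map_id)
    _ = 0 := by
        rw [integral_map hdiag.aemeasurable hdm.aestronglyMeasurable]
        simp [hd]

lemma couplingDist_le_one (hd0 : ∀ x y, 0 ≤ d x y) (hd1 : ∀ x y, d x y ≤ 1) (μ ν : Measure α)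
    [IsProbabilityMeasure μ] [IsProbabilityMeasure ν] : couplingDist d μ ν ≤ 1 :=
  calc couplingDist d μ ν ≤ ∫ z, d z.1 z.2 ∂(μ.prod ν) :=
        couplingDist_le_integral hd0 (by simp [Measure.map_fst_prod]) (by simp [Measure.map_snd_prod])
    _ ≤ (μ.prod ν).real univ := integral_le_measureReal_univ_of_le_one fun z => hd1 _ _
    _ = 1 := by simp

lemma integrable_of_nonneg_of_le_one (hdm : Measurable fun z : α × α => d z.1 z.2) (hd0 : ∀ x y, 0 ≤ d x y)
    (hd1 : ∀ x y, d x y ≤ 1) (π : Measure (α × α)) [IsFiniteMeasure π] :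
    Integrable (fun z => d z.1 z.2) π :=
  Integrable.of_bound hdm.aestronglyMeasurable 1
    (ae_of_all _ fun z => by rw [Real.norm_of_nonneg (hd0 _ _)]; exact hd1 _ _)

/-- Gluing: keep the mass `ν ⊓ m` of `κ`, with `ν` its second marginal, and couple the leftover
mass independently, at cost at most `1` per unit of mass. -/
lemma couplingDist_map_fst_le_integral_add_tvDist (hdm : Measurable fun z : α × α => d z.1 z.2)
    (hd0 : ∀ x y, 0 ≤ d x y) (hd1 : ∀ x y, d x y ≤ 1) (κ : Measure (α × α))
    [IsProbabilityMeasure κ] (m : Measure α) [IsProbabilityMeasure m] :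
    couplingDist d (κ.map Prod.fst) m ≤ ∫ z, d z.1 z.2 ∂κ + tvDist (κ.map Prod.snd) m := by
  have := Measure.isProbabilityMeasure_map (μ := κ) measurable_snd.aemeasurable
  obtain ⟨ρ, hρν, hρm, hρ_tv⟩ := exists_le_le_one_sub_le_tvDist (κ.map Prod.snd) m
  have : IsFiniteMeasure ρ := isFiniteMeasure_of_le m hρm
  obtain ⟨κ₁, hκ₁κ, hκ₁_snd⟩ := exists_le_map_snd_eq κ hρν
  have : IsFiniteMeasure κ₁ := isFiniteMeasure_of_le κ hκ₁κ
  have hκ₁_fst : κ₁.map Prod.fst ≤ κ.map Prod.fst := Measure.map_mono hκ₁κ measurable_fst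
  have hκ₁_univ : κ₁ univ = ρ univ := by
    rw [← hκ₁_snd, Measure.map_apply measurable_snd .univ, preimage_univ]
  obtain ⟨σ, hσ_fst, hσ_snd⟩ := exists_map_fst_eq_map_snd_eq
    (κ.map Prod.fst - κ₁.map Prod.fst) (m - ρ) (by
      rw [Measure.sub_apply .univ hκ₁_fst, Measure.sub_apply .univ hρm,
        Measure.map_apply measurable_fst .univ, Measure.map_apply measurable_fst .univ,
        preimage_univ, hκ₁_univ, measure_univ (μ := κ), measure_univ (μ := m)])
  have hσ_univ : σ univ = (m - ρ) univ := by
    rw [← hσ_snd, Measure.map_apply measurable_snd .univ, preimage_univ]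
  have : IsFiniteMeasure σ := ⟨hσ_univ ▸ measure_lt_top _ _⟩
  have hσ_real : σ.real univ = 1 - ρ.real univ := by
    rw [measureReal_def, hσ_univ, Measure.sub_apply .univ hρm,
      ENNReal.toReal_sub_of_le (hρm univ) (measure_ne_top _ _), measure_univ (μ := m)]
    rfl
  have hint := integrable_of_nonneg_of_le_one hdm hd0 hd1
  calc couplingDist d (κ.map Prod.fst) m ≤ ∫ z, d z.1 z.2 ∂(κ₁ + σ) := by
        refine couplingDist_le_integral hd0 ?_ ?_
        · rw [Measure.map_add _ _ measurable_fst, hσ_fst, add_comm,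
            Measure.sub_add_cancel_of_le hκ₁_fst]
        · rw [Measure.map_add _ _ measurable_snd, hσ_snd, hκ₁_snd, add_comm,
            Measure.sub_add_cancel_of_le hρm]
    _ = ∫ z, d z.1 z.2 ∂κ₁ + ∫ z, d z.1 z.2 ∂σ := integral_add_measure (hint κ₁) (hint σ)
    _ ≤ ∫ z, d z.1 z.2 ∂κ + σ.real univ :=
        add_le_add (integral_mono_measure hκ₁κ (ae_of_all _ fun z => hd0 _ _) (hint κ))
          (integral_le_measureReal_univ_of_le_one fun z => hd1 _ _)
    _ ≤ ∫ z, d z.1 z.2 ∂κ + tvDist (κ.map Prod.snd) m := by rw [hσ_real]; linarith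

end Coupling

section Metric

variable {E : Type*} [NormedAddCommGroup E] {N γ : ℝ}

lemma dNg_nonneg (hN : 0 ≤ N) (x y : E) : 0 ≤ dNg N γ x y :=
  le_min (by positivity) zero_le_one

lemma dNg_le_one (x y : E) : dNg N γ x y ≤ 1 := min_le_right _ _

lemma dNg_self (hγ : γ ≠ 0) (x : E) : dNg N γ x x = 0 := by
  simp [dNg, Real.zero_rpow hγ]

lemma dNg_le_of_norm_sub_le (hN : 0 ≤ N) (hγ : 0 ≤ γ) {x y : E} {t : ℝ} (h : ‖x - y‖ ≤ t) :
    dNg N γ x y ≤ N * t ^ γ :=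
  (min_le_left _ _).trans (by gcongr)

lemma continuous_dNg (hγ : 0 ≤ γ) : Continuous fun z : E × E => dNg N γ z.1 z.2 :=
  (continuous_const.mul ((Real.continuous_rpow_const hγ).comp
    (continuous_fst.sub continuous_snd).norm)).min continuous_const

variable [MeasurableSpace E] [BorelSpace E] [SecondCountableTopology E]
  {Ω : Type*} [MeasurableSpace Ω] (P : Measure Ω) [IsProbabilityMeasure P] {X Y : Ω → E}

lemma integral_dNg_le (hX : Measurable X) (hY : Measurable Y) (hN : 0 ≤ N) (hγ : 0 ≤ γ) {t : ℝ}
    (ht : 0 ≤ t) :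
    ∫ ω, dNg N γ (X ω) (Y ω) ∂P ≤ N * t ^ γ + P.real {ω | t < ‖X ω - Y ω‖} := by
  set A := {ω | t < ‖X ω - Y ω‖}
  have hA : MeasurableSet A := measurableSet_lt measurable_const (hX.sub hY).norm
  have hle : ∀ ω, dNg N γ (X ω) (Y ω) ≤ N * t ^ γ + A.indicator 1 ω := by
    intro ω
    by_cases hω : ω ∈ A
    · rw [indicator_of_mem hω, Pi.one_apply]
      exact (dNg_le_one _ _).trans (le_add_of_nonneg_left (by positivity))
    · rw [indicator_of_notMem hω, add_zero]
      exact dNg_le_of_norm_sub_le hN hγ (not_lt.1 hω)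
  have hint : Integrable (fun ω => dNg N γ (X ω) (Y ω)) P :=
    Integrable.of_bound ((continuous_dNg hγ).measurable.comp (hX.prodMk hY)).aestronglyMeasurable
      1 (ae_of_all _ fun ω => by rw [Real.norm_of_nonneg (dNg_nonneg hN _ _)]; exact dNg_le_one _ _)
  calc ∫ ω, dNg N γ (X ω) (Y ω) ∂P ≤ ∫ ω, (N * t ^ γ + A.indicator 1 ω) ∂P :=
        integral_mono hint ((integrable_const _).add ((integrable_const 1).indicator hA)) hle
    _ = N * t ^ γ + P.real A := by
        rw [integral_add (integrable_const _) ((integrable_const 1).indicator hA),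
          integral_const, integral_indicator_one hA]
        simp

lemma couplingDist_dNg_map_le (hX : Measurable X) (hY : Measurable Y) (m : Measure E)
    [IsProbabilityMeasure m] (hN : 0 ≤ N) (hγ : 0 ≤ γ) {t : ℝ} (ht : 0 ≤ t) :
    couplingDist (dNg N γ) (P.map X) m ≤
      N * t ^ γ + P.real {ω | t < ‖X ω - Y ω‖} + tvDist (P.map Y) m := by
  have hXY : Measurable fun ω => (X ω, Y ω) := hX.prodMk hY
  have := Measure.isProbabilityMeasure_map (μ := P) hXY.aemeasurable
  have hdm := (continuous_dNg (E := E) (N := N) hγ).measurable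
  have h := couplingDist_map_fst_le_integral_add_tvDist hdm (dNg_nonneg hN) dNg_le_one
    (P.map fun ω => (X ω, Y ω)) m
  rw [Measure.map_map measurable_fst hXY, Measure.map_map measurable_snd hXY,
    integral_map hXY.aemeasurable hdm.aestronglyMeasurable] at h
  exact h.trans (add_le_add_left (integral_dNg_le P hX hY hN hγ ht) _)

lemma couplingDist_dNg_le_of_forall_near (hN : 0 ≤ N) (hγ : 0 < γ) {μ : E → Measure E}
    (hμ : ∀ x, IsProbabilityMeasure (μ x))
    (hnear : ∀ x y, x ≠ y → N * ‖x - y‖ ^ γ < 1 →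
      couplingDist (dNg N γ) (μ x) (μ y) ≤ N * ‖x - y‖ ^ γ) (x y : E) :
    couplingDist (dNg N γ) (μ x) (μ y) ≤ dNg N γ x y := by
  rcases eq_or_ne x y with rfl | hxy
  · rw [dNg_self hγ.ne']
    exact couplingDist_self_nonpos (continuous_dNg hγ.le).measurable (dNg_nonneg hN)
      (dNg_self hγ.ne') _
  rcases le_or_gt 1 (N * ‖x - y‖ ^ γ) with hfar | hclose
  · rw [dNg, min_eq_right hfar]
    exact couplingDist_le_one (dNg_nonneg hN) dNg_le_one _ _
  · rw [dNg, min_eq_left hclose.le]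
    exact hnear x y hxy hclose

end Metric

lemma exists_pos_forall_le_rpow_of_tendsto {p : ℝ → ℝ} {γ : ℝ}
    (h : Tendsto (fun s => p s / s ^ γ) (𝓝[>] 0) (𝓝 0)) :
    ∃ δ > 0, ∀ s ∈ Ioo 0 δ, p s ≤ s ^ γ := by
  obtain ⟨δ, hδ, hsub⟩ := mem_nhdsGT_iff_exists_Ioo_subset.1 (h (Iio_mem_nhds one_pos))
  exact ⟨δ, hδ, fun s hs => ((div_lt_one (Real.rpow_pos_of_pos hs.1 γ)).1 (hsub hs)).le⟩

lemma lt_of_mul_rpow_lt_one {N γ s δ : ℝ} (hγ : 0 < γ) (hs : 0 ≤ s) (hδ : 0 < δ)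
    (hN : (δ ^ γ)⁻¹ ≤ N) (h : N * s ^ γ < 1) : s < δ := by
  have hδγ : 0 < δ ^ γ := Real.rpow_pos_of_pos hδ γ
  have hN0 : 0 < N := (inv_pos.2 hδγ).trans_le hN
  rw [← Real.rpow_lt_rpow_iff hs hδ.le hγ]
  refine lt_of_mul_lt_mul_left (h.trans_le ?_) hN0.le
  rwa [← inv_le_iff_one_le_mul₀ hδγ]

theorem generalized_coupling_nonexpanding_general
    (r : ℝ) (n : ℕ)
    (γ υ C θ : ℝ) (hγ : γ ∈ Set.Ioc (0:ℝ) 1) (hυ : 0 < υ)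
    (hθ : θ ∈ Set.Ioo (0:ℝ) 1)
    (p : ℝ → ℝ)
    (hplim : Filter.Tendsto (fun s => p s / s ^ γ) (nhdsWithin 0 (Set.Ioi 0)) (nhds 0))
    {Ω : Type} [MeasurableSpace Ω]
    (P : PathSpace r n → PathSpace r n → Measure Ω)
    (hP : ∀ x y, IsProbabilityMeasure (P x y))
    (μ : PathSpace r n → Measure (PathSpace r n))
    (hμ : ∀ x, IsProbabilityMeasure (μ x))
    (ξ η : PathSpace r n → PathSpace r n → Ω → PathSpace r n)
    (hξm : ∀ x y, Measurable (ξ x y)) (hηm : ∀ x y, Measurable (η x y))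
    (hlaw : ∀ x y, (P x y).map (ξ x y) = μ x)
    (htv : ∀ x y : PathSpace r n, ‖x - y‖ ≤ υ →
      tvDist ((P x y).map (η x y)) (μ y) ≤ C * ‖x - y‖ ^ γ)
    (hclose : ∀ x y : PathSpace r n, ‖x - y‖ ≤ υ →
      ((P x y) {ω | θ * ‖x - y‖ < ‖ξ x y ω - η x y ω‖}).toReal ≤ p ‖x - y‖) :
    ∀ θ₁ ∈ Set.Ioo (θ ^ γ) 1, ∃ N₀ : ℝ, ∀ N ≥ N₀, ∀ x y : PathSpace r n,
      couplingDist (dNg N γ) (μ x) (μ y) ≤ dNg N γ x y := by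
  intro _ _
  obtain ⟨hγ0, -⟩ := hγ
  obtain ⟨δ, hδ, hpδ⟩ := exists_pos_forall_le_rpow_of_tendsto hplim
  have hθγ : θ ^ γ < 1 := Real.rpow_lt_one hθ.1.le hθ.2 hγ0
  refine ⟨max ((1 + C) / (1 - θ ^ γ)) (min δ υ ^ γ)⁻¹, fun N hN => ?_⟩
  have hNδ : (min δ υ ^ γ)⁻¹ ≤ N := (le_max_right _ _).trans hN
  have hN0 : 0 < N := (by have := lt_min hδ hυ; positivity : (0 : ℝ) < _).trans_le hNδ
  refine couplingDist_dNg_le_of_forall_near hN0.le hγ0 hμ fun x y hxy hnear => ?_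
  have := hμ y; have := hP x y
  set s := ‖x - y‖
  have hs : s ∈ Ioo 0 (min δ υ) := ⟨norm_pos_iff.2 (sub_ne_zero.2 hxy),
    lt_of_mul_rpow_lt_one hγ0 (norm_nonneg _) (lt_min hδ hυ) hNδ hnear⟩
  have hsυ : s ≤ υ := hs.2.le.trans (min_le_right _ _)
  calc couplingDist (dNg N γ) (μ x) (μ y)
      ≤ N * (θ * s) ^ γ + (P x y).real {ω | θ * s < ‖ξ x y ω - η x y ω‖} +
          tvDist ((P x y).map (η x y)) (μ y) :=
        hlaw x y ▸ couplingDist_dNg_map_le (P x y) (hξm x y) (hηm x y) (μ y) hN0.le hγ0.le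
          (by have := hθ.1; positivity)
    _ ≤ N * θ ^ γ * s ^ γ + s ^ γ + C * s ^ γ := by
        rw [Real.mul_rpow hθ.1.le (norm_nonneg _), ← mul_assoc]
        exact add_le_add (add_le_add le_rfl ((hclose x y hsυ).trans
          (hpδ s ⟨hs.1, hs.2.trans_le (min_le_left _ _)⟩))) (htv x y hsυ)
    _ ≤ N * s ^ γ := by
        have : 1 + C ≤ N * (1 - θ ^ γ) :=
          (div_le_iff₀ (sub_pos.2 hθγ)).1 ((le_max_left _ _).trans hN)
        nlinarith [Real.rpow_nonneg (norm_nonneg (x - y)) γ]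

/-- Generalized coupling contraction proposition: if for each pair `x,y` there is a
generalized coupling `(ξ^{x,y}, η^{x,y})` with `Law(ξ^{x,y}) = μ^x`, whose second component
is `C‖x−y‖^γ`-close in total variation to `μ^y`, and whose components are `θ`-contracted with
probability at least `1 − p(‖x−y‖)`, then for every `θ₁ ∈ (θ^γ, 1)` there is `N₀` such that
for all `N ≥ N₀` the coupling distance `d_{N,γ}` contracts by the factor `θ₁` on the set
`{(x,y) : d_{N,γ}(x,y) < 1}`. -/
theorem generalized_coupling_nonexpanding
    (r : ℝ) (hr : 0 < r) (n : ℕ)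
    (γ υ C θ : ℝ) (hγ : γ ∈ Set.Ioc (0:ℝ) 1) (hυ : 0 < υ) (hC : 0 < C)
    (hθ : θ ∈ Set.Ioo (0:ℝ) 1)
    (p : ℝ → ℝ) (hp01 : ∀ s : ℝ, 0 < s → p s ∈ Set.Icc (0:ℝ) 1)
    (hplim : Filter.Tendsto (fun s => p s / s ^ γ) (nhdsWithin 0 (Set.Ioi 0)) (nhds 0))
    {Ω : Type} [MeasurableSpace Ω]
    (P : PathSpace r n → PathSpace r n → Measure Ω)
    (hP : ∀ x y, IsProbabilityMeasure (P x y))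
    (μ : PathSpace r n → Measure (PathSpace r n))
    (hμ : ∀ x, IsProbabilityMeasure (μ x))
    (ξ η : PathSpace r n → PathSpace r n → Ω → PathSpace r n)
    (hξm : ∀ x y, Measurable (ξ x y)) (hηm : ∀ x y, Measurable (η x y))
    (hlaw : ∀ x y, (P x y).map (ξ x y) = μ x)
    (htv : ∀ x y : PathSpace r n, ‖x - y‖ ≤ υ →
      tvDist ((P x y).map (η x y)) (μ y) ≤ C * ‖x - y‖ ^ γ)
    (hclose : ∀ x y : PathSpace r n, ‖x - y‖ ≤ υ →
      ((P x y) {ω | θ * ‖x - y‖ < ‖ξ x y ω - η x y ω‖}).toReal ≤ p ‖x - y‖) :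
    ∀ θ₁ ∈ Set.Ioo (θ ^ γ) 1, ∃ N₀ : ℝ, ∀ N ≥ N₀, ∀ x y : PathSpace r n,
      couplingDist (dNg N γ) (μ x) (μ y) ≤ dNg N γ x y :=
  generalized_coupling_nonexpanding_general r n γ υ C θ hγ hυ hθ p hplim P hP μ hμ ξ η hξm hηm hlaw
    htv hclose
end

section
/- Let (W_t)_{t≥0} be a standard one-dimensional Brownian motion. For λ > 0 and t ≥ 0 define, pathwise, Z_λ(t) = ∫₀ᵗ λ e^{−λ(t−s)} (W(t) − W(s)) ds + e^{−λt} W(t) (this equals the stochastic convolution ∫₀ᵗ e^{−λ(t−s)} dW(s)). Then for every δ ∈ (0,1/2) and T > 0 there exist constants C₁, C₂ > 0, depending only on δ and T, such that for all λ > 0 and R ≥ 0, P( sup_{0 ≤ t ≤ T} Z_λ(t) ≥ λ^{−δ} R ) ≤ C₁ e^{−C₂ R²}. -/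
/-!
On the event that every dyadic increment `W((k+1)T/2ⁿ) - W(kT/2ⁿ)` is at most `u (T/2ⁿ)^δ`,
a chaining argument makes the path `δ`-Hölder on `[0, T]` with constant `chainingConst δ * u`.
For a path vanishing at `0` with `|W t - W s| ≤ C (t - s)^δ`, the bound
`(t - s)^δ ≤ λ^{-δ} (1 + λ (t - s))` turns `Z_λ(t)` into an explicit integral of
`λ e^{-λu} (1 + λu)`, whence `|Z_λ(t)| ≤ 2 C λ^{-δ}` for every `λ > 0`.
So with `u` proportional to `R`, the event `sup Z_λ ≥ λ^{-δ} R` forces a large dyadic increment.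
An increment at level `n` is centred Gaussian with variance `T/2ⁿ`, and a union bound over the
`2ⁿ` increments of each level gives `∑ₙ 2ⁿ · 2 exp(-κ 2^{(1-2δ)n})` with `κ ∝ R²`,
which is `O(e^{-κ})` precisely because `δ < 1/2`.
-/

open MeasureTheory Set

/-- The pathwise exponential stochastic convolution
`Z_λ(t) = ∫₀ᵗ λ e^{−λ(t−s)} (W(t) − W(s)) ds + e^{−λt} W(t)`
(the integration-by-parts representation of `∫₀ᵗ e^{−λ(t−s)} dW(s)`). -/
noncomputable def stochConv {Ω : Type*} (W : ℝ → Ω → ℝ) (lam t : ℝ) (ω : Ω) : ℝ :=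
  (∫ s in (0:ℝ)..t, lam * Real.exp (-lam * (t - s)) * (W t ω - W s ω))
    + Real.exp (-lam * t) * W t ω

open Filter Topology ProbabilityTheory Real

lemma rpow_le_one_add_self {x δ : ℝ} (hx : 0 ≤ x) (hδ0 : 0 ≤ δ) (hδ1 : δ ≤ 1) :
    x ^ δ ≤ 1 + x := by
  rcases le_total x 1 with h | h
  · linarith [rpow_le_one hx h hδ0]
  · have := rpow_le_rpow_of_exponent_le h hδ1
    rw [rpow_one] at this
    linarith

lemma rpow_le_rpow_neg_mul_one_add {lam u δ : ℝ} (hlam : 0 < lam) (hu : 0 ≤ u) (hδ0 : 0 ≤ δ)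
    (hδ1 : δ ≤ 1) : u ^ δ ≤ lam ^ (-δ) * (1 + lam * u) := by
  calc u ^ δ = lam ^ (-δ) * (lam * u) ^ δ := by
        rw [mul_rpow hlam.le hu, ← mul_assoc, ← rpow_add hlam, neg_add_cancel, rpow_zero, one_mul]
    _ ≤ lam ^ (-δ) * (1 + lam * u) := by
        gcongr
        exact rpow_le_one_add_self (by positivity) hδ0 hδ1

lemma integral_mul_exp_mul_one_add (lam t : ℝ) :
    ∫ s in (0:ℝ)..t, lam * exp (-lam * (t - s)) * (1 + lam * (t - s))
      = 2 - (2 + lam * t) * exp (-lam * t) := by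
  have hderiv : ∀ s ∈ uIcc 0 t,
      HasDerivAt ((fun s => 2 + lam * (t - s)) * fun s => exp (-lam * (t - s)))
        (lam * exp (-lam * (t - s)) * (1 + lam * (t - s))) s := by
    intro s _
    have hlin : HasDerivAt (fun s => t - s) (-1) s := by
      simpa using (hasDerivAt_id s).const_sub t
    exact (((hlin.const_mul lam).const_add 2).mul ((hlin.const_mul (-lam)).exp)).congr_deriv
      (by ring)
  rw [intervalIntegral.integral_eq_sub_of_hasDerivAt hderiv
    (by apply Continuous.intervalIntegrable; fun_prop)]
  simp

lemma abs_stochConv_le {Ω : Type*} {W : ℝ → Ω → ℝ} {ω : Ω} {lam t δ C : ℝ} (hlam : 0 < lam)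
    (ht : 0 ≤ t) (hδ0 : 0 ≤ δ) (hδ1 : δ ≤ 1) (hC : 0 ≤ C) (hW0 : W 0 ω = 0)
    (hW : ∀ s ∈ Icc 0 t, |W t ω - W s ω| ≤ C * (t - s) ^ δ) :
    |stochConv W lam t ω| ≤ 2 * C * lam ^ (-δ) := by
  have hbound : ∀ s ∈ Icc 0 t, |W t ω - W s ω| ≤ C * lam ^ (-δ) * (1 + lam * (t - s)) := by
    intro s hs
    have := rpow_le_rpow_neg_mul_one_add hlam (sub_nonneg.2 hs.2) hδ0 hδ1
    calc |W t ω - W s ω| ≤ C * (t - s) ^ δ := hW s hs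
      _ ≤ C * lam ^ (-δ) * (1 + lam * (t - s)) := by rw [mul_assoc]; gcongr
  have hint : ‖∫ s in (0:ℝ)..t, lam * exp (-lam * (t - s)) * (W t ω - W s ω)‖
      ≤ C * lam ^ (-δ) * (2 - (2 + lam * t) * exp (-lam * t)) := by
    rw [← integral_mul_exp_mul_one_add, ← intervalIntegral.integral_const_mul]
    refine intervalIntegral.norm_integral_le_of_norm_le ht (ae_of_all _ fun s hs => ?_)
      (by apply Continuous.intervalIntegrable; fun_prop)
    rw [norm_mul, norm_of_nonneg (by positivity), Real.norm_eq_abs]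
    calc lam * exp (-lam * (t - s)) * |W t ω - W s ω|
        ≤ lam * exp (-lam * (t - s)) * (C * lam ^ (-δ) * (1 + lam * (t - s))) := by
          gcongr; exact hbound s (Ioc_subset_Icc_self hs)
      _ = _ := by ring
  have hlast : |exp (-lam * t) * W t ω| ≤ C * lam ^ (-δ) * ((1 + lam * t) * exp (-lam * t)) := by
    have := hbound 0 ⟨le_rfl, ht⟩
    rw [hW0, sub_zero, sub_zero] at this
    rw [abs_mul, abs_of_pos (exp_pos _)]
    nlinarith [exp_pos (-lam * t)]
  calc |stochConv W lam t ω|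
      ≤ ‖∫ s in (0:ℝ)..t, lam * exp (-lam * (t - s)) * (W t ω - W s ω)‖
        + |exp (-lam * t) * W t ω| := abs_add_le _ _
    _ ≤ C * lam ^ (-δ) * (2 - exp (-lam * t)) := by linarith
    _ ≤ 2 * C * lam ^ (-δ) := by
        nlinarith [mul_nonneg (by positivity : 0 ≤ C * lam ^ (-δ)) (exp_pos (-lam * t)).le]

def DyadicIncrementsLE (f : ℝ → ℝ) (T H u : ℝ) : Prop :=
  ∀ n k : ℕ, k < 2 ^ n → |f ((k + 1) * T / 2 ^ n) - f (k * T / 2 ^ n)| ≤ u * (T / 2 ^ n) ^ H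

noncomputable def dyadicIndex (T : ℝ) (m : ℕ) (t : ℝ) : ℕ := ⌊t * 2 ^ m / T⌋₊

noncomputable def dyadicFloor (T : ℝ) (m : ℕ) (t : ℝ) : ℝ := dyadicIndex T m t * T / 2 ^ m

/-- The Hölder constant produced by chaining: a geometric tail `∑ⱼ 2^{-Hj} = 1 / (1 - 2^{-H})`
at each endpoint, plus one grid step, which costs at most `2 (t - s)^H`. -/
noncomputable def chainingConst (H : ℝ) : ℝ := 2 + 2 / (1 - 2 ^ (-H))

lemma Nat.floor_two_mul_mem {K : Type*} [Field K] [LinearOrder K] [IsStrictOrderedRing K]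
    [FloorSemiring K] {x : K} (hx : 0 ≤ x) :
    2 * ⌊x⌋₊ ≤ ⌊2 * x⌋₊ ∧ ⌊2 * x⌋₊ ≤ 2 * ⌊x⌋₊ + 1 := by
  constructor
  · apply Nat.le_floor
    push_cast
    linarith [Nat.floor_le hx]
  · have : ⌊2 * x⌋₊ < 2 * ⌊x⌋₊ + 2 := by
      rw [Nat.floor_lt (by positivity)]
      push_cast
      linarith [Nat.lt_floor_add_one x]
    omega

lemma div_two_pow_rpow {T : ℝ} (hT : 0 ≤ T) (H : ℝ) (n : ℕ) :
    (T / 2 ^ n) ^ H = T ^ H * ((2 : ℝ) ^ (-H)) ^ n := by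
  rw [div_rpow hT (by positivity), ← rpow_natCast, ← rpow_natCast, ← rpow_mul zero_le_two,
    ← rpow_mul zero_le_two, neg_mul, rpow_neg zero_le_two, div_eq_mul_inv, mul_comm H]

lemma chainingConst_pos {H : ℝ} (hH : 0 < H) : 0 < chainingConst H := by
  have : (2 : ℝ) ^ (-H) < 1 := rpow_lt_one_of_one_lt_of_neg one_lt_two (neg_lt_zero.2 hH)
  unfold chainingConst
  have := div_pos two_pos (sub_pos.2 this)
  linarith

section Dyadic

variable {T : ℝ} {m : ℕ} {s t : ℝ}

lemma dyadicFloor_nonneg (hT : 0 ≤ T) : 0 ≤ dyadicFloor T m t := by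
  unfold dyadicFloor; positivity

lemma dyadicFloor_le (hT : 0 < T) (ht : 0 ≤ t) : dyadicFloor T m t ≤ t := by
  have := Nat.floor_le (show 0 ≤ t * 2 ^ m / T by positivity)
  unfold dyadicFloor dyadicIndex
  rw [div_le_iff₀ (by positivity)]
  calc (⌊t * 2 ^ m / T⌋₊ : ℝ) * T ≤ t * 2 ^ m / T * T := by gcongr
    _ = t * 2 ^ m := by field_simp

lemma sub_lt_dyadicFloor (hT : 0 < T) : t - T / 2 ^ m < dyadicFloor T m t := by
  have := Nat.lt_floor_add_one (t * 2 ^ m / T)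
  unfold dyadicFloor dyadicIndex
  rw [sub_lt_iff_lt_add, ← add_div, lt_div_iff₀ (by positivity)]
  rw [div_lt_iff₀ hT] at this
  linarith

lemma tendsto_dyadicFloor (hT : 0 < T) (ht : 0 ≤ t) :
    Tendsto (fun m => dyadicFloor T m t) atTop (𝓝 t) := by
  have hlow : Tendsto (fun m : ℕ => t - T / 2 ^ m) atTop (𝓝 t) := by
    simpa using tendsto_const_nhds.sub
      (tendsto_const_nhds.div_atTop (tendsto_pow_atTop_atTop_of_one_lt (one_lt_two (α := ℝ))))
  exact tendsto_of_tendsto_of_tendsto_of_le_of_le hlow tendsto_const_nhds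
    (fun m => (sub_lt_dyadicFloor hT).le) (fun m => dyadicFloor_le hT ht)

lemma dyadicIndex_le_two_pow (hT : 0 < T) (ht : t ≤ T) : dyadicIndex T m t ≤ 2 ^ m := by
  apply Nat.floor_le_of_le
  rw [div_le_iff₀ hT]
  push_cast
  nlinarith [pow_pos (zero_lt_two : (0:ℝ) < 2) m]

lemma dyadicIndex_succ_mem (hT : 0 < T) (ht : 0 ≤ t) :
    2 * dyadicIndex T m t ≤ dyadicIndex T (m + 1) t ∧
      dyadicIndex T (m + 1) t ≤ 2 * dyadicIndex T m t + 1 := by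
  have : t * 2 ^ (m + 1) / T = 2 * (t * 2 ^ m / T) := by ring
  unfold dyadicIndex
  rw [this]
  exact Nat.floor_two_mul_mem (by positivity)

lemma dyadicIndex_mem_of_sub_le (hT : 0 < T) (hs : 0 ≤ s) (hst : s ≤ t)
    (hclose : t - s ≤ T / 2 ^ m) :
    dyadicIndex T m s ≤ dyadicIndex T m t ∧ dyadicIndex T m t ≤ dyadicIndex T m s + 1 := by
  unfold dyadicIndex
  refine ⟨Nat.floor_le_floor (by gcongr), ?_⟩
  rw [← Nat.floor_add_one (by positivity)]
  apply Nat.floor_le_floor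
  rw [le_div_iff₀ (by positivity)] at hclose
  rw [div_add_one hT.ne', div_le_div_iff_of_pos_right hT]
  linarith

end Dyadic

namespace DyadicIncrementsLE

variable {f : ℝ → ℝ} {T H u : ℝ} {m : ℕ} {s t : ℝ}

lemma nonneg (hd : DyadicIncrementsLE f T H u) (hT : 0 < T) : 0 ≤ u := by
  have := (abs_nonneg _).trans (hd 0 0 one_pos)
  rw [pow_zero, div_one] at this
  exact nonneg_of_mul_nonneg_left this (rpow_pos_of_pos hT H)

lemma abs_sub_le_of_index (hd : DyadicIncrementsLE f T H u) {n i j : ℕ} (hij : i ≤ j)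
    (hji : j ≤ i + 1) (hj : j ≤ 2 ^ n) :
    |f (j * T / 2 ^ n) - f (i * T / 2 ^ n)| ≤ u * (T / 2 ^ n) ^ H := by
  rcases (show j = i ∨ j = i + 1 by omega) with rfl | rfl
  · rw [sub_self, abs_zero]
    exact (abs_nonneg _).trans (hd n 0 (by positivity))
  · exact_mod_cast hd n i (by omega)

lemma abs_sub_dyadicFloor_succ_le (hd : DyadicIncrementsLE f T H u) (hT : 0 < T) (ht : 0 ≤ t)
    (htT : t ≤ T) :
    |f (dyadicFloor T m t) - f (dyadicFloor T (m + 1) t)| ≤ u * (T / 2 ^ (m + 1)) ^ H := by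
  obtain ⟨hlo, hhi⟩ := dyadicIndex_succ_mem (m := m) hT ht
  have hfloor : dyadicFloor T m t = ((2 * dyadicIndex T m t : ℕ) : ℝ) * T / 2 ^ (m + 1) := by
    unfold dyadicFloor; push_cast; rw [pow_succ]; field_simp
  rw [abs_sub_comm, hfloor]
  exact hd.abs_sub_le_of_index hlo hhi (dyadicIndex_le_two_pow hT htT)

lemma abs_dyadicFloor_sub_dyadicFloor_le (hd : DyadicIncrementsLE f T H u) (hT : 0 < T)
    (hs : 0 ≤ s) (hst : s ≤ t) (htT : t ≤ T) (hclose : t - s ≤ T / 2 ^ m) :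
    |f (dyadicFloor T m t) - f (dyadicFloor T m s)| ≤ u * (T / 2 ^ m) ^ H := by
  obtain ⟨hlo, hhi⟩ := dyadicIndex_mem_of_sub_le hT hs hst hclose
  exact hd.abs_sub_le_of_index hlo hhi (dyadicIndex_le_two_pow hT htT)

lemma abs_sub_dyadicFloor_le (hd : DyadicIncrementsLE f T H u) (hT : 0 < T) (hH : 0 < H)
    (hf : ContinuousOn f (Icc 0 T)) (ht : 0 ≤ t) (htT : t ≤ T) (m : ℕ) :
    |f t - f (dyadicFloor T m t)| ≤ u * (T / 2 ^ (m + 1)) ^ H / (1 - 2 ^ (-H)) := by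
  have hr : (2 : ℝ) ^ (-H) < 1 := rpow_lt_one_of_one_lt_of_neg one_lt_two (neg_lt_zero.2 hH)
  have hstep : ∀ n, dist (f (dyadicFloor T n t)) (f (dyadicFloor T (n + 1) t))
      ≤ u * (T / 2) ^ H * ((2 : ℝ) ^ (-H)) ^ n := by
    intro n
    rw [mul_assoc, ← div_two_pow_rpow (by positivity), div_div, ← pow_succ']
    exact hd.abs_sub_dyadicFloor_succ_le hT ht htT
  have hlim : Tendsto (fun n => f (dyadicFloor T n t)) atTop (𝓝 (f t)) :=
    ((hf t ⟨ht, htT⟩).tendsto).comp (tendsto_nhdsWithin_iff.2 ⟨tendsto_dyadicFloor hT ht,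
      Eventually.of_forall fun n => ⟨dyadicFloor_nonneg hT.le, (dyadicFloor_le hT ht).trans htT⟩⟩)
  have := dist_le_of_le_geometric_of_tendsto _ _ hr hstep hlim m
  rwa [dist_comm, Real.dist_eq, mul_assoc, ← div_two_pow_rpow (by positivity), div_div,
    ← pow_succ'] at this

lemma abs_sub_le_rpow (hd : DyadicIncrementsLE f T H u) (hT : 0 < T) (hH0 : 0 < H) (hH1 : H ≤ 1)
    (hf : ContinuousOn f (Icc 0 T)) (hs : 0 ≤ s) (hst : s ≤ t) (htT : t ≤ T) :
    |f t - f s| ≤ chainingConst H * u * (t - s) ^ H := by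
  rcases hst.eq_or_lt with rfl | hlt
  · rw [sub_self, sub_self, abs_zero, zero_rpow hH0.ne', mul_zero]
  have hts : 0 < t - s := sub_pos.2 hlt
  obtain ⟨m, hm, hm'⟩ := exists_nat_pow_near (x := T / (t - s))
    ((one_le_div hts).2 (by linarith)) (one_lt_two (α := ℝ))
  have hclose : t - s ≤ T / 2 ^ m := by
    rw [le_div_iff₀ hts] at hm; rw [le_div_iff₀ (by positivity)]; linarith
  have hfar : T / 2 ^ (m + 1) ≤ t - s := by
    rw [div_lt_iff₀ hts] at hm'; rw [div_le_iff₀ (by positivity)]; linarith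
  have hu := hd.nonneg hT
  set ρ := (T / 2 ^ (m + 1)) ^ H
  have hρ : ρ ≤ (t - s) ^ H := rpow_le_rpow (by positivity) hfar hH0.le
  have hmid : u * (T / 2 ^ m) ^ H ≤ 2 * (u * ρ) := by
    have h2 : (2 : ℝ) ^ H ≤ 2 := by
      simpa using rpow_le_rpow_of_exponent_le one_le_two hH1
    have : (T / 2 ^ m) ^ H = 2 ^ H * ρ := by
      rw [← mul_rpow zero_le_two (by positivity), pow_succ]; field_simp
    rw [this]
    nlinarith [mul_nonneg hu (rpow_nonneg (by positivity : 0 ≤ T / 2 ^ (m + 1)) H)]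
  have htail_t := hd.abs_sub_dyadicFloor_le hT hH0 hf (hs.trans hst) htT m
  have htail_s := hd.abs_sub_dyadicFloor_le hT hH0 hf hs (hst.trans htT) m
  have hgrid := hd.abs_dyadicFloor_sub_dyadicFloor_le hT hs hst htT hclose
  rw [abs_sub_comm] at htail_s
  have hK : chainingConst H * (u * ρ) = 2 * (u * ρ) + 2 * (u * ρ / (1 - 2 ^ (-H))) := by
    unfold chainingConst; field_simp
  calc |f t - f s|
      ≤ |f t - f (dyadicFloor T m t)| + |f (dyadicFloor T m t) - f (dyadicFloor T m s)|
        + |f (dyadicFloor T m s) - f s| := by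
        linarith [abs_sub_le (f t) (f (dyadicFloor T m t)) (f s),
          abs_sub_le (f (dyadicFloor T m t)) (f (dyadicFloor T m s)) (f s)]
    _ ≤ chainingConst H * (u * ρ) := by linarith
    _ ≤ chainingConst H * u * (t - s) ^ H := by
        rw [mul_assoc]; gcongr; exact (chainingConst_pos hH0).le

end DyadicIncrementsLE

section Gaussian

variable {Ω : Type*} [MeasurableSpace Ω] {μ : Measure Ω} {X : Ω → ℝ} {v : NNReal}

lemma hasSubgaussianMGF_of_map_eq_gaussianReal (hX : AEMeasurable X μ)
    (h : μ.map X = gaussianReal 0 v) : HasSubgaussianMGF X v μ := by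
  refine (HasSubgaussianMGF.id_map_iff hX).1 ?_
  rw [h]
  exact ⟨fun t => integrable_exp_mul_gaussianReal t, fun t => by simp [mgf_id_gaussianReal]⟩

lemma measureReal_le_abs_le_of_map_eq_gaussianReal (hX : AEMeasurable X μ)
    (h : μ.map X = gaussianReal 0 v) {r : ℝ} (hr : 0 ≤ r) :
    μ.real {ω | r ≤ |X ω|} ≤ 2 * exp (-r ^ 2 / (2 * v)) := by
  have hsub := hasSubgaussianMGF_of_map_eq_gaussianReal hX h
  have hunion : {ω | r ≤ |X ω|} = {ω | r ≤ X ω} ∪ {ω | r ≤ (-X) ω} := by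
    ext ω; simp [le_abs]
  rw [hunion, two_mul]
  exact (measureReal_union_le _ _).trans
    (add_le_add (hsub.measure_ge_le hr) (hsub.neg.measure_ge_le hr))

end Gaussian

lemma two_pow_mul_exp_neg_le {a κ : ℝ} (ha : 0 < a) (hκ : 2 ≤ a * κ) (n : ℕ) :
    2 ^ n * exp (-κ * ((2 : ℝ) ^ a) ^ n) ≤ exp (-κ) * 2⁻¹ ^ n := by
  have hκ0 : 0 ≤ κ := by nlinarith
  have hlog : 0 ≤ n * log 2 := by positivity
  have hpow : 1 + n * log 2 * a ≤ ((2 : ℝ) ^ a) ^ n := by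
    rw [← rpow_natCast, ← rpow_mul zero_le_two, rpow_def_of_pos two_pos]
    linarith [add_one_le_exp (log 2 * (a * n))]
  calc 2 ^ n * exp (-κ * ((2 : ℝ) ^ a) ^ n) = exp (n * log 2 + -κ * ((2 : ℝ) ^ a) ^ n) := by
        rw [exp_add, exp_nat_mul, exp_log two_pos]
    _ ≤ exp (-κ + -(n * log 2)) := by
        refine exp_le_exp.2 ?_
        nlinarith [mul_le_mul_of_nonneg_left hpow hκ0, mul_le_mul_of_nonneg_left hκ hlog]
    _ = exp (-κ) * 2⁻¹ ^ n := by
        rw [exp_add, exp_neg (n * log 2), exp_nat_mul, exp_log two_pos, inv_pow]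

lemma tsum_two_pow_mul_exp_neg_le {a κ : ℝ} (ha : 0 < a) (hκ : 2 ≤ a * κ) :
    ∑' n : ℕ, 2 ^ n * ENNReal.ofReal (2 * exp (-κ * ((2 : ℝ) ^ a) ^ n))
      ≤ ENNReal.ofReal (4 * exp (-κ)) := by
  have hgeom : HasSum (fun n : ℕ => 2 * exp (-κ) * 2⁻¹ ^ n) (4 * exp (-κ)) := by
    have := (hasSum_geometric_of_lt_one (r := (2 : ℝ)⁻¹) (by norm_num) (by norm_num)).mul_left
      (2 * exp (-κ))
    rwa [show 2 * exp (-κ) * (1 - 2⁻¹)⁻¹ = 4 * exp (-κ) by norm_num; ring] at this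
  calc ∑' n : ℕ, 2 ^ n * ENNReal.ofReal (2 * exp (-κ * ((2 : ℝ) ^ a) ^ n))
      ≤ ∑' n : ℕ, ENNReal.ofReal (2 * exp (-κ) * 2⁻¹ ^ n) := by
        refine ENNReal.tsum_le_tsum fun n => ?_
        rw [← ENNReal.ofReal_ofNat 2, ← ENNReal.ofReal_pow zero_le_two,
          ← ENNReal.ofReal_mul (by positivity)]
        refine ENNReal.ofReal_le_ofReal ?_
        nlinarith [two_pow_mul_exp_neg_le ha hκ n]
    _ = ENNReal.ofReal (4 * exp (-κ)) := by
        rw [← ENNReal.ofReal_tsum_of_nonneg (fun n => by positivity) hgeom.summable,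
          hgeom.tsum_eq]

lemma div_two_pow_rpow_sq_div {T : ℝ} (hT : 0 < T) (H : ℝ) (n : ℕ) :
    ((T / 2 ^ n) ^ H) ^ 2 / (T / 2 ^ n) = T ^ (2 * H - 1) * ((2 : ℝ) ^ (1 - 2 * H)) ^ n := by
  have hx : 0 < T / 2 ^ n := by positivity
  rw [← rpow_natCast, ← rpow_mul hx.le, Nat.cast_ofNat, ← rpow_sub_one hx.ne', mul_comm H,
    div_two_pow_rpow hT.le, neg_sub]

section Brownian

variable {Ω : Type*} [MeasurableSpace Ω] {P : Measure Ω} [IsFiniteMeasure P]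
  {W : ℝ → Ω → ℝ}

lemma measure_lt_abs_increment_le (hmeas : ∀ t, Measurable (W t))
    (hincr : ∀ s t : ℝ, 0 ≤ s → s ≤ t →
      P.map (fun ω => W t ω - W s ω) = gaussianReal 0 (t - s).toNNReal)
    {s t r : ℝ} (hs : 0 ≤ s) (hst : s ≤ t) (hr : 0 ≤ r) :
    P {ω | r < |W t ω - W s ω|} ≤ ENNReal.ofReal (2 * exp (-r ^ 2 / (2 * (t - s)))) := by
  have := measureReal_le_abs_le_of_map_eq_gaussianReal ((hmeas t).sub (hmeas s)).aemeasurable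
    (hincr s t hs hst) hr
  rw [Real.coe_toNNReal _ (sub_nonneg.2 hst)] at this
  calc P {ω | r < |W t ω - W s ω|} ≤ P {ω | r ≤ |W t ω - W s ω|} :=
        measure_mono fun ω (h : r < _) => h.le
    _ ≤ _ := by rw [← ofReal_measureReal]; exact ENNReal.ofReal_le_ofReal this

lemma measure_not_dyadicIncrementsLE_le (hmeas : ∀ t, Measurable (W t))
    (hincr : ∀ s t : ℝ, 0 ≤ s → s ≤ t →
      P.map (fun ω => W t ω - W s ω) = gaussianReal 0 (t - s).toNNReal)
    {T H u : ℝ} (hT : 0 < T) (hu : 0 ≤ u) :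
    P {ω | ¬ DyadicIncrementsLE (fun t => W t ω) T H u}
      ≤ ∑' n : ℕ, 2 ^ n * ENNReal.ofReal
          (2 * exp (-(u ^ 2 * T ^ (2 * H - 1) / 2) * ((2 : ℝ) ^ (1 - 2 * H)) ^ n)) := by
  have hsub : {ω | ¬ DyadicIncrementsLE (fun t => W t ω) T H u}
      ⊆ ⋃ n : ℕ, ⋃ k ∈ Finset.range (2 ^ n),
        {ω | u * (T / 2 ^ n) ^ H < |W ((k + 1) * T / 2 ^ n) ω - W (k * T / 2 ^ n) ω|} := by
    intro ω hω
    simp only [DyadicIncrementsLE, not_forall, not_le, exists_prop] at hω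
    obtain ⟨n, k, hk, h⟩ := hω
    simp only [mem_iUnion, Finset.mem_range, mem_ofPred_eq]
    exact ⟨n, k, hk, h⟩
  refine (measure_mono hsub).trans ((measure_iUnion_le _).trans (ENNReal.tsum_le_tsum fun n => ?_))
  have hexp : -(u * (T / 2 ^ n) ^ H) ^ 2 / (2 * (T / 2 ^ n))
      = -(u ^ 2 * T ^ (2 * H - 1) / 2) * ((2 : ℝ) ^ (1 - 2 * H)) ^ n := by
    rw [mul_pow, show ∀ a b c : ℝ, -(a * b) / (2 * c) = -(a / 2) * (b / c) by intros; ring,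
      div_two_pow_rpow_sq_div hT]
    ring
  refine (measure_biUnion_finset_le _ _).trans ?_
  refine (Finset.sum_le_card_nsmul _ _ _ fun k _ => ?_).trans_eq
    (by rw [Finset.card_range, nsmul_eq_mul]; norm_cast)
  have hincr_k := measure_lt_abs_increment_le hmeas hincr (t := (k + 1) * T / 2 ^ n)
    (by positivity : (0 : ℝ) ≤ k * T / 2 ^ n)
    (by gcongr; linarith) (by positivity : 0 ≤ u * (T / 2 ^ n) ^ H)
  rwa [show ((k : ℝ) + 1) * T / 2 ^ n - k * T / 2 ^ n = T / 2 ^ n by ring, hexp] at hincr_k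

end Brownian

lemma DyadicIncrementsLE.iSup_stochConv_le {Ω : Type*} {W : ℝ → Ω → ℝ} {ω : Ω} {T δ u lam : ℝ}
    (hd : DyadicIncrementsLE (fun t => W t ω) T δ u) (hT : 0 < T) (hδ0 : 0 < δ) (hδ1 : δ ≤ 1)
    (hcont : ContinuousOn (fun t => W t ω) (Icc 0 T)) (hW0 : W 0 ω = 0) (hlam : 0 < lam) :
    ⨆ t : Icc (0 : ℝ) T, stochConv W lam t ω ≤ 2 * (chainingConst δ * u) * lam ^ (-δ) := by
  have : Nonempty (Icc (0 : ℝ) T) := ⟨⟨0, le_rfl, hT.le⟩⟩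
  have hC : 0 ≤ chainingConst δ * u := mul_nonneg (chainingConst_pos hδ0).le (hd.nonneg hT)
  exact ciSup_le fun t => (le_abs_self _).trans <| abs_stochConv_le hlam t.2.1 hδ0.le hδ1 hC hW0
    fun s hs => hd.abs_sub_le_rpow hT hδ0 hδ1 hcont hs.1 hs.2 t.2.2

lemma setOf_le_iSup_stochConv_subset {Ω : Type*} {W : ℝ → Ω → ℝ} {T δ lam R : ℝ} (hT : 0 < T)
    (hδ0 : 0 < δ) (hδ1 : δ ≤ 1) (hcont : ∀ ω, ContinuousOn (fun t => W t ω) (Icc 0 T))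
    (hW0 : ∀ ω, W 0 ω = 0) (hlam : 0 < lam) (hR : 0 < R) :
    {ω | lam ^ (-δ) * R ≤ ⨆ t : Icc (0 : ℝ) T, stochConv W lam t ω}
      ⊆ {ω | ¬ DyadicIncrementsLE (fun t => W t ω) T δ (R / (4 * chainingConst δ))} := by
  intro ω hω hd
  have hsup := hd.iSup_stochConv_le hT hδ0 hδ1 (hcont ω) (hW0 ω) hlam
  rw [show 2 * (chainingConst δ * (R / (4 * chainingConst δ))) = R / 2 by
    field_simp [(chainingConst_pos hδ0).ne']; ring] at hsup
  nlinarith [mem_ofPred.1 hω, rpow_pos_of_pos hlam (-δ)]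

lemma le_add_exp_mul_exp_neg_of_tail {p κ κ₀ A : ℝ} (hA : 0 ≤ A) (hp : p ≤ 1)
    (htail : κ₀ ≤ κ → p ≤ A * exp (-κ)) : p ≤ (A + exp κ₀) * exp (-κ) := by
  rcases le_or_gt κ₀ κ with h | h
  · nlinarith [htail h, exp_pos κ₀, exp_pos (-κ)]
  · have : 1 ≤ exp κ₀ * exp (-κ) := by rw [← exp_add]; exact one_le_exp (by linarith)
    nlinarith [exp_pos (-κ)]

theorem stochastic_convolution_tail_bound_general
    {Ω : Type*} [MeasurableSpace Ω] (P : Measure Ω) [IsProbabilityMeasure P]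
    (W : ℝ → Ω → ℝ)
    (hmeas : ∀ t : ℝ, Measurable (W t))
    (hcont : ∀ ω : Ω, ContinuousOn (fun t => W t ω) (Set.Ici (0:ℝ)))
    (hW0 : ∀ ω : Ω, W 0 ω = 0)
    (hincr : ∀ s t : ℝ, 0 ≤ s → s ≤ t →
      P.map (fun ω => W t ω - W s ω) = ProbabilityTheory.gaussianReal 0 (t - s).toNNReal)
    (δ T : ℝ) (hδ : δ ∈ Set.Ioo (0:ℝ) (1/2)) (hT : 0 < T) :
    ∃ C₁ > (0:ℝ), ∃ C₂ > (0:ℝ), ∀ lam : ℝ, 0 < lam → ∀ R : ℝ, 0 ≤ R →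
      (P {ω | lam ^ (-δ) * R ≤ ⨆ t : Set.Icc (0:ℝ) T, stochConv W lam (t : ℝ) ω}).toReal
        ≤ C₁ * Real.exp (-C₂ * R ^ 2) := by
  obtain ⟨hδ0, hδ1⟩ := hδ
  set K := chainingConst δ
  have hK : 0 < K := chainingConst_pos hδ0
  set C₂ := T ^ (2 * δ - 1) / 2 / (4 * K) ^ 2
  refine ⟨4 + exp (2 / (1 - 2 * δ)), by positivity, C₂, by positivity, fun lam hlam R hR => ?_⟩
  rw [neg_mul]
  refine le_add_exp_mul_exp_neg_of_tail (by norm_num) measureReal_le_one fun hκ => ?_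
  have hκR : (R / (4 * K)) ^ 2 * T ^ (2 * δ - 1) / 2 = C₂ * R ^ 2 := by ring
  have hRpos : 0 < R := hR.lt_of_ne' <| by
    rintro rfl
    have := (div_pos two_pos (by linarith : 0 < 1 - 2 * δ)).trans_le hκ
    simp at this
  refine ENNReal.toReal_le_of_le_ofReal (by positivity) ?_
  calc P {ω | lam ^ (-δ) * R ≤ ⨆ t : Icc (0 : ℝ) T, stochConv W lam t ω}
      ≤ P {ω | ¬ DyadicIncrementsLE (fun t => W t ω) T δ (R / (4 * K))} :=
        measure_mono <| setOf_le_iSup_stochConv_subset hT hδ0 (by linarith)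
          (fun ω => (hcont ω).mono Icc_subset_Ici_self) hW0 hlam hRpos
    _ ≤ _ := measure_not_dyadicIncrementsLE_le hmeas hincr hT (by positivity)
    _ ≤ _ := tsum_two_pow_mul_exp_neg_le (by linarith) (by rwa [hκR, ← div_le_iff₀' (by linarith)])
    _ = _ := by rw [hκR]

/-- Uniform tail bound for the exponential stochastic convolution of Brownian motion:
for a standard one-dimensional Brownian motion `W`, every `δ ∈ (0,1/2)` and `T > 0`, there
exist `C₁, C₂ > 0` depending only on `δ, T` such that for all `λ > 0` and `R ≥ 0`,
`P(sup_{0 ≤ t ≤ T} Z_λ(t) ≥ λ^{−δ} R) ≤ C₁ e^{−C₂ R²}`. -/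
theorem stochastic_convolution_tail_bound
    {Ω : Type*} [MeasurableSpace Ω] (P : Measure Ω) [IsProbabilityMeasure P]
    (W : ℝ → Ω → ℝ)
    (hmeas : ∀ t : ℝ, Measurable (W t))
    (hcont : ∀ ω : Ω, ContinuousOn (fun t => W t ω) (Set.Ici (0:ℝ)))
    (hW0 : ∀ ω : Ω, W 0 ω = 0)
    (hincr : ∀ s t : ℝ, 0 ≤ s → s ≤ t →
      P.map (fun ω => W t ω - W s ω) = ProbabilityTheory.gaussianReal 0 (t - s).toNNReal)
    (hindep : ∀ (m : ℕ) (t : ℕ → ℝ), Monotone t → 0 ≤ t 0 →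
      ProbabilityTheory.iIndepFun (m := fun _ : Fin m => Real.measurableSpace)
        (fun (i : Fin m) (ω : Ω) => W (t ((i : ℕ) + 1)) ω - W (t (i : ℕ)) ω) P)
    (δ T : ℝ) (hδ : δ ∈ Set.Ioo (0:ℝ) (1/2)) (hT : 0 < T) :
    ∃ C₁ > (0:ℝ), ∃ C₂ > (0:ℝ), ∀ lam : ℝ, 0 < lam → ∀ R : ℝ, 0 ≤ R →
      (P {ω | lam ^ (-δ) * R ≤ ⨆ t : Set.Icc (0:ℝ) T, stochConv W lam (t : ℝ) ω}).toReal
        ≤ C₁ * Real.exp (-C₂ * R ^ 2) :=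
  stochastic_convolution_tail_bound_general P W hmeas hcont hW0 hincr δ T hδ hT
end
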